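/- arXiv:1602.06732 — 2 statements merged into one kernel-verified Lean document; each statement's English description precedes it below -/
import Mathlib

section
/- Let n ≥ 1 and 1 ≤ k ≤ n. Let f_1,…,f_m ∈ ℝ[x_1,…,x_n] be polynomials each of which belongs to the ℝ-subalgebra of ℝ[x_1,…,x_n] generated by the even power sums s_2, s_4, …, s_{2k}. If the real variety X = {x ∈ ℝ^n : f_1(x) = ⋯ = f_m(x) = 0} is nonempty, then there exists a point x ∈ X whose nonzero coordinates take at most k distinct absolute values, i.e. the set {|x_i| : 1 ≤ i ≤ n, x_i ≠ 0} has cardinality at most k. -/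
open MvPolynomial

/-!
Pick `x` minimising `s_{2k+2}` on the compact fibre of `(s₂, …, s_{2k})` through a point of the
variety; the polynomials `f_j`, being polynomials in `s₂, …, s_{2k}`, still vanish at `x`.
By Lagrange multipliers, some nontrivial combination of the gradients of `s₂, …, s_{2k+2}` vanishes
at `x`. Coordinatewise this reads `x_l · P(x_l²) = 0` for a nonzero polynomial `P` of degree `≤ k`,
so the nonzero `x_l²`, and hence the nonzero `|x_l|`, take at most `k` values.
-/

open Finset
open scoped Polynomial

theorem ncard_image_abs_le_natDegree {ι : Type*} [Finite ι] {x : ι → ℝ} {P : ℝ[X]} (hP : P ≠ 0)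
    (hroot : ∀ l, x l ≠ 0 → P.IsRoot (x l ^ 2)) :
    ((fun i => |x i|) '' {i | x i ≠ 0}).ncard ≤ P.natDegree := by
  have habs : (fun i => |x i|) '' {i | x i ≠ 0} =
      Real.sqrt '' ((fun i => x i ^ 2) '' {i | x i ≠ 0}) := by
    rw [Set.image_image]
    simp only [Real.sqrt_sq_eq_abs]
  have hsq : (fun i => x i ^ 2) '' {i | x i ≠ 0} ⊆ P.roots.toFinset := by
    rintro _ ⟨l, hl, rfl⟩
    simpa [hP] using hroot l hl
  calc ((fun i => |x i|) '' {i | x i ≠ 0}).ncard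
      ≤ ((fun i => x i ^ 2) '' {i | x i ≠ 0}).ncard := habs ▸ Set.ncard_image_le (Set.toFinite _)
    _ ≤ (P.roots.toFinset : Set ℝ).ncard := Set.ncard_le_ncard hsq (finite_toSet _)
    _ = P.roots.toFinset.card := Set.ncard_coe_finset _
    _ ≤ P.roots.card := Multiset.toFinset_card_le _
    _ ≤ P.natDegree := Polynomial.card_roots' P

section PowerSums

variable {ι : Type*} [Fintype ι]

theorem hasStrictFDerivAt_sum_pow (j : ℕ) (x : ι → ℝ) :
    HasStrictFDerivAt (fun y : ι → ℝ => ∑ l, y l ^ j)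
      (∑ l, (j * x l ^ (j - 1)) • ContinuousLinearMap.proj (R := ℝ) (φ := fun _ : ι => ℝ) l) x :=
  HasStrictFDerivAt.fun_sum fun l _ =>
    (hasStrictDerivAt_pow j (x l)).comp_hasStrictFDerivAt x (hasStrictFDerivAt_apply l x)

theorem isBounded_setOf_sum_sq_eq (C : ℝ) :
    Bornology.IsBounded {y : ι → ℝ | ∑ l, y l ^ 2 = C} := by
  refine (Metric.isBounded_iff_subset_closedBall 0).2 ⟨√C, fun y hy => ?_⟩
  rw [mem_closedBall_zero_iff, pi_norm_le_iff_of_nonneg (Real.sqrt_nonneg C)]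
  intro l
  rw [Real.norm_eq_abs, ← hy]
  exact Real.abs_le_sqrt (single_le_sum (fun i _ => sq_nonneg (y i)) (mem_univ l))

theorem isCompact_setOf_sum_pow_eq {k : ℕ} (hk : 0 < k) (c : Fin k → ℝ) :
    IsCompact {y : ι → ℝ | ∀ i : Fin k, ∑ l, y l ^ (2 * ((i : ℕ) + 1)) = c i} := by
  refine Metric.isCompact_of_isClosed_isBounded ?_
    ((isBounded_setOf_sum_sq_eq (c ⟨0, hk⟩)).subset fun y hy => by simpa using hy ⟨0, hk⟩)
  simp only [Set.ofPred_forall]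
  exact isClosed_iInter fun i => isClosed_eq (by fun_prop) continuous_const

theorem exists_isRoot_sq_of_isLocalExtrOn {k : ℕ} {x : ι → ℝ}
    (hx : IsLocalExtrOn (fun y : ι → ℝ => ∑ l, y l ^ (2 * (k + 1)))
      {y | ∀ i : Fin k, ∑ l, y l ^ (2 * ((i : ℕ) + 1)) = ∑ l, x l ^ (2 * ((i : ℕ) + 1))} x) :
    ∃ P : ℝ[X], P ≠ 0 ∧ P.natDegree ≤ k ∧ ∀ l, x l ≠ 0 → P.IsRoot (x l ^ 2) := by
  obtain ⟨Λ, Λ₀, hΛ, hcrit⟩ := hx.exists_multipliers_of_hasStrictFDerivAt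
    (fun i => hasStrictFDerivAt_sum_pow _ x) (hasStrictFDerivAt_sum_pow _ x)
  -- `x_l · P(x_l²)` is the `l`-th partial derivative of `∑ᵢ Λᵢ s_{2i+2} + Λ₀ s_{2k+2}` at `x`.
  set P : ℝ[X] := ∑ i : Fin k, Polynomial.C (Λ i * (2 * ((i : ℕ) + 1))) * Polynomial.X ^ (i : ℕ) +
    Polynomial.C (Λ₀ * (2 * (k + 1))) * Polynomial.X ^ k
  have hcoeff_lt (i : Fin k) : P.coeff i = Λ i * (2 * ((i : ℕ) + 1)) := by
    simp only [P, Polynomial.coeff_add, Polynomial.finsetSum_coeff, Polynomial.coeff_C_mul_X_pow,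
      Fin.val_inj, sum_ite_eq, mem_univ, if_true, if_neg i.2.ne, add_zero]
  have hcoeff_k : P.coeff k = Λ₀ * (2 * (k + 1)) := by
    simp only [P, Polynomial.coeff_add, Polynomial.finsetSum_coeff, Polynomial.coeff_C_mul_X_pow]
    simp [sum_eq_zero fun (i : Fin k) _ => if_neg i.2.ne']
  refine ⟨P, fun hP0 => hΛ ?_, ?_, fun l hl => ?_⟩
  · simp only [hP0, Polynomial.coeff_zero, zero_eq_mul, mul_eq_zero, two_ne_zero,
      Nat.cast_add_one_ne_zero, or_self, or_false] at hcoeff_lt hcoeff_k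
    exact Prod.ext (funext hcoeff_lt) hcoeff_k
  · exact Polynomial.natDegree_add_le_of_degree_le
      (Polynomial.natDegree_sum_le_of_forall_le _ _ fun i _ =>
        (Polynomial.natDegree_C_mul_X_pow_le _ _).trans i.2.le)
      (Polynomial.natDegree_C_mul_X_pow_le _ _)
  · classical
    have h := congr($hcrit (Pi.single l 1))
    simp only [add_apply, FunLike.coe_sum, Finset.sum_apply,
      FunLike.coe_smul, Pi.smul_apply, ContinuousLinearMap.proj_apply,
      Pi.single_apply, smul_eq_mul, mul_ite, mul_one, mul_zero, sum_ite_eq',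
      mem_univ, if_true, zero_apply] at h
    have hterm (c : ℝ) (j : ℕ) : x l * (c * (2 * (j + 1)) * (x l ^ 2) ^ j) =
        c * ((2 * (j + 1) : ℕ) * x l ^ (2 * (j + 1) - 1)) := by
      rw [show 2 * (j + 1) - 1 = 2 * j + 1 by omega]
      push_cast
      ring
    have hxP : x l * P.eval (x l ^ 2) = 0 := by
      rw [Polynomial.eval_add, Polynomial.eval_finsetSum, mul_add, mul_sum]
      simp only [Polynomial.eval_mul, Polynomial.eval_C, Polynomial.eval_pow, Polynomial.eval_X,
        hterm]
      exact h
    exact (mul_eq_zero.1 hxP).resolve_left hl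

theorem exists_sum_pow_eq_and_ncard_abs_le (k : ℕ) (x₀ : ι → ℝ) :
    ∃ x : ι → ℝ, (∀ i : Fin k, ∑ l, x l ^ (2 * ((i : ℕ) + 1)) = ∑ l, x₀ l ^ (2 * ((i : ℕ) + 1))) ∧
      ((fun i => |x i|) '' {i | x i ≠ 0}).ncard ≤ k := by
  rcases k.eq_zero_or_pos with rfl | hk
  · exact ⟨0, finZeroElim, by simp⟩
  obtain ⟨x, hx : ∀ i : Fin k, _ = _, hmin⟩ :=
    (isCompact_setOf_sum_pow_eq hk _).exists_isMinOn ⟨x₀, fun i => rfl⟩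
      (f := fun y : ι → ℝ => ∑ l, y l ^ (2 * (k + 1))) (by fun_prop)
  have hfiber := hmin.isExtr.localize
  simp only [← hx] at hfiber
  obtain ⟨P, hP, hdeg, hroot⟩ := exists_isRoot_sq_of_isLocalExtrOn hfiber
  exact ⟨x, hx, (ncard_image_abs_le_natDegree hP hroot).trans hdeg⟩

end PowerSums

theorem degree_principle_Bn_general
    (n : ℕ) (k : ℕ)
    (m : ℕ) (f : Fin m → MvPolynomial (Fin n) ℝ)
    (hf : ∀ j, f j ∈ Algebra.adjoin ℝ
      {p : MvPolynomial (Fin n) ℝ | ∃ i, 1 ≤ i ∧ i ≤ k ∧ p = psum (Fin n) ℝ (2 * i)})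
    (hX : ∃ x : Fin n → ℝ, ∀ j, eval x (f j) = 0) :
    ∃ x : Fin n → ℝ, (∀ j, eval x (f j) = 0) ∧
      (((fun i => |x i|) '' {i | x i ≠ 0}).ncard ≤ k) := by
  obtain ⟨x₀, hx₀⟩ := hX
  obtain ⟨x, hpsum, hcard⟩ := exists_sum_pow_eq_and_ncard_abs_le k x₀
  have hgen : Set.EqOn (aeval x) (aeval x₀)
      {p : MvPolynomial (Fin n) ℝ | ∃ i, 1 ≤ i ∧ i ≤ k ∧ p = psum (Fin n) ℝ (2 * i)} := by
    rintro _ ⟨i, hi1, hik, rfl⟩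
    obtain ⟨i, rfl⟩ : ∃ i' : Fin k, i = i' + 1 := ⟨⟨i - 1, by omega⟩, (Nat.sub_add_cancel hi1).symm⟩
    simpa [psum] using hpsum i
  refine ⟨x, fun j => ?_, hcard⟩
  rw [← hx₀ j, ← coe_aeval_eq_eval, ← coe_aeval_eq_eval]
  exact AlgHom.eqOn_adjoin_iff.2 hgen (hf j)

/-- Theorem 1.2 for type `Bₙ`: a nonempty real variety defined by polynomials in
the even power sums `s₂, s₄, …, s_{2k}` contains a point whose nonzero coordinates
take at most `k` distinct absolute values. -/
theorem degree_principle_Bn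
    (n : ℕ) (hn : 1 ≤ n) (k : ℕ) (hk1 : 1 ≤ k) (hkn : k ≤ n)
    (m : ℕ) (f : Fin m → MvPolynomial (Fin n) ℝ)
    (hf : ∀ j, f j ∈ Algebra.adjoin ℝ
      {p : MvPolynomial (Fin n) ℝ | ∃ i, 1 ≤ i ∧ i ≤ k ∧ p = psum (Fin n) ℝ (2 * i)})
    (hX : ∃ x : Fin n → ℝ, ∀ j, eval x (f j) = 0) :
    ∃ x : Fin n → ℝ, (∀ j, eval x (f j) = 0) ∧
      (((fun i => |x i|) '' {i | x i ≠ 0}).ncard ≤ k) :=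
  degree_principle_Bn_general n k m f hf hX
end

section
/- Let n ≥ 2 and fix 2 ≤ j ≤ n. Let f, f_1,…,f_m ∈ ℝ[x_1,…,x_n] be polynomials each belonging to the ℝ-subalgebra generated by {s_i : 2 ≤ i ≤ n, i ≠ j}, and let S = {x ∈ ℝ^n : x_1 + ⋯ + x_n = 0, f_1(x) ≥ 0, …, f_m(x) ≥ 0}. Then: (i) S is nonempty if and only if S contains a point x with x_i = x_{i'} for some indices i ≠ i'; and (ii) f(x) ≥ 0 for all x ∈ S if and only if f(x) ≥ 0 for all x ∈ S having two equal coordinates x_i = x_{i'}, i ≠ i'. -/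
/-!
Fix the power sums `s_k`, `k ∈ {1, …, n} \ {j}`, at their values at a point `x₀`. On this level
set `s_j` attains an extremum: the level set is compact when `j ≠ 2`, and `s_2` is coercive.
At an extremum `x`, Lagrange multipliers give a nonzero polynomial `P = ∑ λ_k X^k` with exponents
in `{1, …, n}` such that `P'(x_t) = 0` for every coordinate `x_t`; as `deg P' < n`, two
coordinates of `x` coincide. Every polynomial in `s_1` and the `s_k`, `k ≠ j`, takes the same
value at `x` as at `x₀`.
-/

open MvPolynomial

open Polynomial in
theorem Polynomial.not_injective_of_forall_sum_mul_pow_eq_zero {R ι : Type*} [CommRing R]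
    [IsDomain R] [CharZero R] [Fintype ι] {E : Finset ℕ}
    (hE : E ⊆ Finset.Icc 1 (Fintype.card ι)) {c : ℕ → R} (hc : ∃ e ∈ E, c e ≠ 0) {x : ι → R}
    (hx : ∀ t, ∑ e ∈ E, c e * e * x t ^ (e - 1) = 0) : ¬ Function.Injective x := by
  intro hinj
  set P : R[X] := ∑ e ∈ E, C (c e) * X ^ e
  have hcoeff : ∀ e ∈ E, P.coeff e = c e := fun e he => by simp [P, he]
  have hP_deg : P.natDegree ≤ Fintype.card ι :=
    natDegree_sum_le_of_forall_le _ _ fun e he =>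
      (natDegree_C_mul_X_pow_le _ _).trans (Finset.mem_Icc.mp (hE he)).2
  have hP_deg_ne : P.natDegree ≠ 0 := by
    obtain ⟨e, he, hce⟩ := hc
    intro h0
    have he0 : e ≠ 0 := Nat.one_le_iff_ne_zero.mp (Finset.mem_Icc.mp (hE he)).1
    exact hce (by rw [← hcoeff e he, coeff_eq_zero_of_natDegree_lt (by omega)])
  have hroots : ∀ t, (derivative P).eval (x t) = 0 := fun t => by
    simpa [P, derivative_sum, derivative_X_pow, eval_finsetSum, mul_assoc] using hx t
  refine derivative_ne_zero.mpr hP_deg_ne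
    (eq_zero_of_natDegree_lt_card_of_eval_eq_zero _ hinj hroots ?_)
  have := natDegree_derivative_le P
  omega

section PowSum

variable {ι : Type*} [Fintype ι]

def powSum (k : ℕ) (x : ι → ℝ) : ℝ := ∑ t, x t ^ k

theorem continuous_powSum (k : ℕ) : Continuous (powSum (ι := ι) k) := by
  unfold powSum
  fun_prop

theorem hasStrictFDerivAt_powSum (k : ℕ) (x : ι → ℝ) :
    HasStrictFDerivAt (powSum k)
      (∑ t, ((k : ℝ) * x t ^ (k - 1)) • ContinuousLinearMap.proj (R := ℝ) (φ := fun _ : ι => ℝ) t)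
      x :=
  HasStrictFDerivAt.fun_sum fun t _ =>
    (hasStrictDerivAt_pow k (x t)).comp_hasStrictFDerivAt x (hasStrictFDerivAt_apply t x)

def powSumLevelSet (K : Finset ℕ) (x : ι → ℝ) : Set (ι → ℝ) :=
  {y | ∀ k ∈ K, powSum k y = powSum k x}

theorem powSumLevelSet_eq_of_mem {K : Finset ℕ} {x y : ι → ℝ} (hy : y ∈ powSumLevelSet K x) :
    powSumLevelSet K y = powSumLevelSet K x := by
  ext z
  exact forall₂_congr fun k hk => by rw [hy k hk]

theorem isClosed_powSumLevelSet (K : Finset ℕ) (x : ι → ℝ) : IsClosed (powSumLevelSet K x) := by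
  simp only [powSumLevelSet, Set.ofPred_forall]
  exact isClosed_biInter fun k _ => isClosed_eq (continuous_powSum k) continuous_const

theorem isCompact_setOf_powSum_two_le (C : ℝ) : IsCompact {y : ι → ℝ | powSum 2 y ≤ C} := by
  refine Metric.isCompact_of_isClosed_isBounded
    (isClosed_le (continuous_powSum 2) continuous_const)
    ((Metric.isBounded_closedBall (x := 0) (r := √C)).subset fun y hy => ?_)
  rw [Metric.mem_closedBall, dist_zero_right, pi_norm_le_iff_of_nonneg (Real.sqrt_nonneg C)]
  refine fun t => Real.abs_le_sqrt ((Finset.single_le_sum (f := fun t => y t ^ 2)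
    (fun t _ => sq_nonneg (y t)) (Finset.mem_univ t)).trans hy)

theorem exists_isLocalExtrOn_powSum {K : Finset ℕ} {j : ℕ} (hK : j = 2 ∨ 2 ∈ K) (x₀ : ι → ℝ) :
    ∃ x ∈ powSumLevelSet K x₀, IsLocalExtrOn (powSum j) (powSumLevelSet K x₀) x := by
  have hx₀ : x₀ ∈ powSumLevelSet K x₀ := fun _ _ => rfl
  rcases hK with rfl | h2
  · have hC := isCompact_setOf_powSum_two_le (ι := ι) (powSum 2 x₀)
    obtain ⟨x, hx, hmin⟩ := (continuous_powSum 2).continuousOn.exists_isMinOn'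
      (isClosed_powSumLevelSet K x₀) hx₀ (Filter.mem_inf_of_left
        (Filter.mem_of_superset hC.compl_mem_cocompact fun y hy => le_of_not_ge hy))
    exact ⟨x, hx, hmin.localize.isExtr⟩
  · have hV : IsCompact (powSumLevelSet K x₀) :=
      (isCompact_setOf_powSum_two_le (powSum 2 x₀)).of_isClosed_subset
        (isClosed_powSumLevelSet K x₀) fun y hy => (hy 2 h2).le
    obtain ⟨x, hx, hmax⟩ := hV.exists_isMaxOn ⟨x₀, hx₀⟩ (continuous_powSum j).continuousOn
    exact ⟨x, hx, hmax.localize.isExtr⟩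

theorem not_injective_of_isLocalExtrOn_powSum {K : Finset ℕ} {j : ℕ} (hjK : j ∉ K)
    (hE : insert j K ⊆ Finset.Icc 1 (Fintype.card ι)) {x : ι → ℝ}
    (hx : IsLocalExtrOn (powSum j) (powSumLevelSet K x) x) : ¬ Function.Injective x := by
  classical
  replace hx : IsLocalExtrOn (powSum j) {y | ∀ k : K, powSum k y = powSum k x} x := by
    simpa [powSumLevelSet] using hx
  obtain ⟨Λ, Λ₀, hΛ, hsum⟩ := hx.exists_multipliers_of_hasStrictFDerivAt
    (fun k => hasStrictFDerivAt_powSum k x) (hasStrictFDerivAt_powSum j x)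
  set c : ℕ → ℝ := fun e => if h : e ∈ K then Λ ⟨e, h⟩ else Λ₀
  refine Polynomial.not_injective_of_forall_sum_mul_pow_eq_zero hE (c := c) ?_ fun t => ?_
  · by_cases hΛ₀ : Λ₀ = 0
    · have hΛne : Λ ≠ 0 := fun h => hΛ (by simp [h, hΛ₀])
      obtain ⟨k, hk⟩ := Function.ne_iff.mp hΛne
      exact ⟨k, Finset.mem_insert_of_mem k.2, by simpa [c] using hk⟩
    · exact ⟨j, Finset.mem_insert_self j K, by simpa [c, hjK] using hΛ₀⟩
  · have hcK : ∀ k : K, c k = Λ k := fun k => dif_pos k.2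
    have hcj : c j = Λ₀ := dif_neg hjK
    have := congrArg (fun L => L (Pi.single t 1)) hsum
    rw [Finset.sum_insert hjK, ← Finset.sum_coe_sort K]
    simpa [Pi.single_apply, hcK, hcj, mul_assoc, add_comm] using this
theorem exists_mem_powSumLevelSet_not_injective {j : ℕ} (hj : 2 ≤ j) (hjn : j ≤ Fintype.card ι)
    (x₀ : ι → ℝ) :
    ∃ x ∈ powSumLevelSet ((Finset.Icc 1 (Fintype.card ι)).erase j) x₀, ¬ Function.Injective x := by
  set K := (Finset.Icc 1 (Fintype.card ι)).erase j
  have hK : j = 2 ∨ 2 ∈ K := by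
    rcases hj.eq_or_lt with h | h
    · exact Or.inl h.symm
    · exact Or.inr (by simp only [K, Finset.mem_erase, Finset.mem_Icc]; omega)
  obtain ⟨x, hx, hextr⟩ := exists_isLocalExtrOn_powSum hK x₀
  rw [← powSumLevelSet_eq_of_mem hx] at hextr
  refine ⟨x, hx, not_injective_of_isLocalExtrOn_powSum (Finset.notMem_erase j _) ?_ hextr⟩
  rw [Finset.insert_erase (Finset.mem_Icc.mpr ⟨by omega, hjn⟩)]

end PowSum

theorem MvPolynomial.eval_eq_of_mem_adjoin {σ R : Type*} [CommSemiring R]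
    {s : Set (MvPolynomial σ R)} {x y : σ → R} (h : ∀ p ∈ s, eval x p = eval y p)
    {g : MvPolynomial σ R} (hg : g ∈ Algebra.adjoin R s) : eval x g = eval y g := by
  simpa [coe_aeval_eq_eval] using (AlgHom.eqOn_adjoin_iff (φ := aeval x) (ψ := aeval y)).mpr h hg

theorem semialgebraic_all_but_one_An_general
    (n : ℕ) (j : ℕ) (hj2 : 2 ≤ j) (hjn : j ≤ n)
    (m : ℕ) (f : MvPolynomial (Fin n) ℝ) (fs : Fin m → MvPolynomial (Fin n) ℝ)
    (hmem : ∀ g ∈ insert f (Set.range fs), g ∈ Algebra.adjoin ℝ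
      {p : MvPolynomial (Fin n) ℝ |
        ∃ i, 2 ≤ i ∧ i ≤ n ∧ i ≠ j ∧ p = psum (Fin n) ℝ i}) :
    (((∃ x : Fin n → ℝ, (∑ t, x t) = 0 ∧ ∀ l, 0 ≤ eval x (fs l)) ↔
      (∃ x : Fin n → ℝ, (∑ t, x t) = 0 ∧ (∀ l, 0 ≤ eval x (fs l)) ∧
        ∃ i i' : Fin n, i ≠ i' ∧ x i = x i'))) ∧
    ((∀ x : Fin n → ℝ, (∑ t, x t) = 0 → (∀ l, 0 ≤ eval x (fs l)) →
        0 ≤ eval x f) ↔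
      (∀ x : Fin n → ℝ, (∑ t, x t) = 0 → (∀ l, 0 ≤ eval x (fs l)) →
        (∃ i i' : Fin n, i ≠ i' ∧ x i = x i') → 0 ≤ eval x f)) := by
  have transfer (x : Fin n → ℝ) (hx : ∑ t, x t = 0) (hfs : ∀ l, 0 ≤ eval x (fs l)) :
      ∃ y : Fin n → ℝ, ∑ t, y t = 0 ∧ (∀ l, 0 ≤ eval y (fs l)) ∧ eval y f = eval x f ∧
        ∃ i i' : Fin n, i ≠ i' ∧ y i = y i' := by
    obtain ⟨y, hy, hinj⟩ :=
      exists_mem_powSumLevelSet_not_injective (ι := Fin n) hj2 (by simpa using hjn) x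
    have hy (k : ℕ) (h1 : 1 ≤ k) (hkn : k ≤ n) (hkj : k ≠ j) : powSum k y = powSum k x :=
      hy k (by simp [*])
    have heval (g) (hg : g ∈ insert f (Set.range fs)) : eval y g = eval x g := by
      refine eval_eq_of_mem_adjoin ?_ (hmem g hg)
      rintro _ ⟨k, hk2, hkn, hkj, rfl⟩
      simpa [powSum, psum] using hy k (by omega) hkn hkj
    obtain ⟨i, i', hii', hne⟩ := Function.not_injective_iff.mp hinj
    refine ⟨y, by simpa [powSum, hx] using hy 1 le_rfl (by omega) (by omega), fun l => ?_,
      heval f (Set.mem_insert f _), i, i', hne, hii'⟩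
    rw [heval _ (Set.mem_insert_of_mem _ ⟨l, rfl⟩)]
    exact hfs l
  refine ⟨⟨fun ⟨x, hx, hfs⟩ => ?_, fun ⟨x, hx, hfs, _⟩ => ⟨x, hx, hfs⟩⟩,
    ⟨fun h x hx hfs _ => h x hx hfs, fun h x hx hfs => ?_⟩⟩
  · obtain ⟨y, hy, hfsy, -, hyy⟩ := transfer x hx hfs
    exact ⟨y, hy, hfsy, hyy⟩
  · obtain ⟨y, hy, hfsy, hfy, hyy⟩ := transfer x hx hfs
    exact hfy ▸ h y hy hfsy hyy

/-- Corollary 3.6 for type `A_{n-1}`: let `f, f₁, …, f_m` be polynomials in the power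
sums `s_i`, `2 ≤ i ≤ n`, `i ≠ j`, and let
`S = {x : x₁ + ⋯ + xₙ = 0, f₁(x) ≥ 0, …, f_m(x) ≥ 0}`. Then (i) `S` is nonempty iff
it contains a point with two equal coordinates, and (ii) `f ≥ 0` on `S` iff `f ≥ 0` on
the points of `S` having two equal coordinates. -/
theorem semialgebraic_all_but_one_An
    (n : ℕ) (hn : 2 ≤ n) (j : ℕ) (hj2 : 2 ≤ j) (hjn : j ≤ n)
    (m : ℕ) (f : MvPolynomial (Fin n) ℝ) (fs : Fin m → MvPolynomial (Fin n) ℝ)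
    (hmem : ∀ g ∈ insert f (Set.range fs), g ∈ Algebra.adjoin ℝ
      {p : MvPolynomial (Fin n) ℝ |
        ∃ i, 2 ≤ i ∧ i ≤ n ∧ i ≠ j ∧ p = psum (Fin n) ℝ i}) :
    (((∃ x : Fin n → ℝ, (∑ t, x t) = 0 ∧ ∀ l, 0 ≤ eval x (fs l)) ↔
      (∃ x : Fin n → ℝ, (∑ t, x t) = 0 ∧ (∀ l, 0 ≤ eval x (fs l)) ∧
        ∃ i i' : Fin n, i ≠ i' ∧ x i = x i'))) ∧
    ((∀ x : Fin n → ℝ, (∑ t, x t) = 0 → (∀ l, 0 ≤ eval x (fs l)) →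
        0 ≤ eval x f) ↔
      (∀ x : Fin n → ℝ, (∑ t, x t) = 0 → (∀ l, 0 ≤ eval x (fs l)) →
        (∃ i i' : Fin n, i ≠ i' ∧ x i = x i') → 0 ≤ eval x f)) :=
  semialgebraic_all_but_one_An_general n j hj2 hjn m f fs hmem
end
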